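/- Let V be a complex Banach space, let μ : ℝ → ℂ be bounded, continuous and almost automorphic such that t ↦ Re(μ(t)) is ergodic with mean M(Re μ) ≠ 0, and let f : ℝ → V be bounded, continuous and almost automorphic. If M(Re μ) < 0, then y(t) = ∫_{−∞}^t exp(∫_s^t μ(r) dr)·f(s) ds is the unique bounded differentiable solution of y'(t) = μ(t)·y(t) + f(t) on ℝ, and y is almost automorphic. If M(Re μ) > 0, then y(t) = −∫_t^{∞} exp(∫_s^t μ(r) dr)·f(s) ds is the unique bounded differentiable solution, and it is almost automorphic. -/

import Mathlib

open MeasureTheory Filter Topology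

/-- A continuous function `ψ : ℝ → V` into a Banach space is almost automorphic if for every
sequence of reals there is a subsequence `(τₙ)` and a function `ψ̃` with
`ψ(t+τₙ) → ψ̃(t)` and `ψ̃(t−τₙ) → ψ(t)` pointwise on `ℝ`. -/
def AlmostAutomorphic {V : Type*} [NormedAddCommGroup V] (ψ : ℝ → V) : Prop :=
  Continuous ψ ∧ ∀ σ : ℕ → ℝ, ∃ k : ℕ → ℕ, StrictMono k ∧ ∃ ψt : ℝ → V,
    (∀ t : ℝ, Tendsto (fun n => ψ (t + σ (k n))) atTop (𝓝 (ψt t))) ∧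
    (∀ t : ℝ, Tendsto (fun n => ψt (t - σ (k n))) atTop (𝓝 (ψ t)))

/-- A bounded continuous function `f : ℝ → ℝ` is ergodic with mean `M` if
`(1/(2T)) ∫_{−T+ξ}^{T+ξ} f(s) ds → M` as `T → ∞`, uniformly with respect to `ξ ∈ ℝ`. -/
def ErgodicMeanR (f : ℝ → ℝ) (M : ℝ) : Prop :=
  ∀ ε > 0, ∃ T₁ > (0 : ℝ), ∀ T ≥ T₁, ∀ ξ : ℝ,
    |(2 * T)⁻¹ * (∫ s in (-T + ξ)..(T + ξ), f s) - M| < ε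

/-!
If `m < 0`, the uniform ergodic mean gives `K` with `∫_s^t Re μ ≤ K - (-m/2)(t - s)` for all
`s ≤ t`, so the kernel `exp (∫_s^t μ)` decays exponentially in `t - s`. Hence the
variation-of-constants integral converges, is bounded, and (writing the kernel as
`exp (∫_0^t μ) · exp (∫_s^0 μ)`) solves the equation. Two bounded solutions differ by a solution of
`w' = μ w`, and `w t = exp (∫_s^t μ) • w s` with `s → -∞` forces `w = 0`. For almost automorphy,
take a common subsequence for `μ` and `f`: the limit coefficient inherits the bound and the decay
estimate, so dominated convergence passes the shifted integrals to the limit in both directions.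
The case `m > 0` is the case `m < 0` for `-μ (-t)` and `-f (-t)`, i.e. after reversing time.
-/

open Set

/-- Equivalently `‖exp (∫_s^t μ)‖ ≤ exp (K - γ (t - s))` for `s ≤ t`: for `γ > 0`, uniform
exponential stability of `x' = μ x`. -/
def ExpStable (μ : ℝ → ℂ) (K γ : ℝ) : Prop :=
  ∀ s t : ℝ, s ≤ t → ∫ r in s..t, (μ r).re ≤ K - γ * (t - s)

noncomputable def variationOfConstants {V : Type*} [NormedAddCommGroup V] [NormedSpace ℂ V]
    (μ : ℝ → ℂ) (f : ℝ → V) (t : ℝ) : V :=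
  ∫ s in Iic t, Complex.exp (∫ r in s..t, μ r) • f s

def IsUniqueBoundedAlmostAutomorphicSolution {V : Type*} [NormedAddCommGroup V]
    [NormedSpace ℂ V] (μ : ℝ → ℂ) (f y : ℝ → V) : Prop :=
  (∀ t, HasDerivAt y (μ t • y t + f t) t) ∧ (∃ C, ∀ t, ‖y t‖ ≤ C) ∧ AlmostAutomorphic y ∧
    ∀ z : ℝ → V, (∀ t, HasDerivAt z (μ t • z t + f t) t) → (∃ C, ∀ t, ‖z t‖ ≤ C) → z = y

section RealAnalysis

lemma exp_sub_mul_sub_eq (K γ t s : ℝ) :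
    Real.exp (K - γ * (t - s)) = Real.exp (K - γ * t) * Real.exp (γ * s) := by
  rw [← Real.exp_add]; ring_nf

variable {γ : ℝ}

lemma integrableOn_exp_sub_mul_sub_Iic (K : ℝ) (hγ : 0 < γ) (t : ℝ) :
    IntegrableOn (fun s => Real.exp (K - γ * (t - s))) (Iic t) := by
  simp_rw [exp_sub_mul_sub_eq]
  exact (integrableOn_exp_mul_Iic hγ t).const_mul _

lemma integral_exp_sub_mul_sub_Iic (K : ℝ) (hγ : 0 < γ) (t : ℝ) :
    ∫ s in Iic t, Real.exp (K - γ * (t - s)) = Real.exp K / γ := by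
  simp_rw [exp_sub_mul_sub_eq]
  rw [integral_const_mul, integral_exp_mul_Iic hγ, ← mul_div_assoc, ← Real.exp_add, sub_add_cancel]

lemma tendsto_intervalIntegral_of_norm_le {E : Type*} [NormedAddCommGroup E] [NormedSpace ℝ E]
    {F : ℕ → ℝ → E} {f : ℝ → E} {C : ℝ} (hm : ∀ n, AEStronglyMeasurable (F n))
    (hb : ∀ n x, ‖F n x‖ ≤ C) (hlim : ∀ x, Tendsto (fun n => F n x) atTop (𝓝 (f x))) (a b : ℝ) :
    Tendsto (fun n => ∫ x in a..b, F n x) atTop (𝓝 (∫ x in a..b, f x)) :=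
  intervalIntegral.tendsto_integral_filter_of_dominated_convergence (fun _ => C)
    (Eventually.of_forall fun n => (hm n).restrict)
    (Eventually.of_forall fun n => ae_of_all _ fun x _ => hb n x) intervalIntegrable_const
    (ae_of_all _ fun x _ => hlim x)

lemma setIntegral_Iic_comp_add_right {E : Type*} [NormedAddCommGroup E] [NormedSpace ℝ E]
    (h : ℝ → E) (t c : ℝ) : ∫ s in Iic t, h (s + c) = ∫ s in Iic (t + c), h s := by
  have := (measurePreserving_add_right volume c).setIntegral_preimage_emb
    (MeasurableEquiv.addRight c).measurableEmbedding h (Iic (t + c))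
  rwa [show (· + c) ⁻¹' Iic (t + c) = Iic t by ext; simp] at this

lemma MeasureTheory.AEStronglyMeasurable.comp_add_right {E : Type*} [NormedAddCommGroup E]
    {ψ : ℝ → E} (h : AEStronglyMeasurable ψ) (c : ℝ) : AEStronglyMeasurable fun t => ψ (t + c) :=
  h.comp_quasiMeasurePreserving (measurePreserving_add_right volume c).quasiMeasurePreserving

lemma aestronglyMeasurable_of_tendsto_comp_add {E : Type*} [NormedAddCommGroup E]
    {ψ ψ' : ℝ → E} {τ : ℕ → ℝ} (hψ : AEStronglyMeasurable ψ)
    (h : ∀ t, Tendsto (fun n => ψ (t + τ n)) atTop (𝓝 (ψ' t))) : AEStronglyMeasurable ψ' :=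
  aestronglyMeasurable_of_tendsto_ae atTop (fun n => hψ.comp_add_right (τ n)) (ae_of_all _ h)

lemma hasDerivAt_setIntegral_Iic {E : Type*} [NormedAddCommGroup E] [NormedSpace ℝ E]
    [CompleteSpace E] {h : ℝ → E} (hc : Continuous h) (hi : ∀ u, IntegrableOn h (Iic u))
    (t : ℝ) : HasDerivAt (fun u => ∫ s in Iic u, h s) (h t) t := by
  have heq : (fun u => ∫ s in Iic u, h s) = fun u => (∫ s in Iic t, h s) + ∫ s in t..u, h s :=
    funext fun u => by rw [← intervalIntegral.integral_Iic_sub_Iic (hi t) (hi u), add_sub_cancel]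
  rw [heq]
  exact (intervalIntegral.integral_hasDerivAt_right (hc.intervalIntegrable t t)
    (hc.stronglyMeasurableAtFilter _ _) hc.continuousAt).const_add _

end RealAnalysis

lemma ErgodicMeanR.comp_neg {a : ℝ → ℝ} {m : ℝ} (h : ErgodicMeanR a m) :
    ErgodicMeanR (fun t => -a (-t)) (-m) := by
  intro ε hε
  obtain ⟨T₁, hT₁, hT⟩ := h ε hε
  refine ⟨T₁, hT₁, fun T hT' ξ => ?_⟩
  have hint : ∫ s in (-T + ξ)..(T + ξ), -a (-s) = -∫ s in (-T + -ξ)..(T + -ξ), a s := by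
    rw [intervalIntegral.integral_neg, intervalIntegral.integral_comp_neg]
    ring_nf
  rw [hint, ← abs_neg]
  convert hT T hT' (-ξ) using 2
  ring

lemma ErgodicMeanR.expStable {μ : ℝ → ℂ} {m C : ℝ} (hm : ErgodicMeanR (fun t => (μ t).re) m)
    (hμ : ∀ t, ‖μ t‖ ≤ C) (hneg : m < 0) : ∃ K, ExpStable μ K (-m / 2) := by
  obtain ⟨T₁, hT₁, hT⟩ := hm (-m / 2) (by linarith)
  have hC : 0 ≤ C := (norm_nonneg _).trans (hμ 0)
  -- on intervals shorter than `2 T₁` only `|Re μ| ≤ C` is available; `K` absorbs them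
  refine ⟨(C - m / 2) * (2 * T₁), fun s t hst => ?_⟩
  rcases le_or_gt (2 * T₁) (t - s) with hlong | hshort
  · have hmean := (abs_lt.mp (hT ((t - s) / 2) (by linarith) ((s + t) / 2))).2
    rw [show -((t - s) / 2) + (s + t) / 2 = s by ring, show (t - s) / 2 + (s + t) / 2 = t by ring,
      show 2 * ((t - s) / 2) = t - s by ring] at hmean
    have hlt : (t - s)⁻¹ * ∫ r in s..t, (μ r).re < m / 2 := by linarith
    rw [inv_mul_lt_iff₀ (by linarith)] at hlt
    nlinarith
  · have hbound : ∫ r in s..t, (μ r).re ≤ C * (t - s) := by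
      have := intervalIntegral.norm_integral_le_of_norm_le_const (a := s) (b := t)
        (f := fun r => (μ r).re) fun r _ => (Complex.abs_re_le_norm (μ r)).trans (hμ r)
      rw [abs_of_nonneg (by linarith)] at this
      exact (le_abs_self _).trans this
    nlinarith

section Kernel

variable {V : Type*} [NormedAddCommGroup V] [NormedSpace ℂ V] {μ : ℝ → ℂ} {K γ : ℝ}

lemma ExpStable.norm_exp_integral_le (hK : ExpStable μ K γ)
    (hμ : ∀ a b, IntervalIntegrable μ volume a b) {s t : ℝ} (hst : s ≤ t) :
    ‖Complex.exp (∫ r in s..t, μ r)‖ ≤ Real.exp (K - γ * (t - s)) := by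
  rw [Complex.norm_exp, ← Complex.reCLM_apply,
    ← ContinuousLinearMap.intervalIntegral_comp_comm _ (hμ s t)]
  exact Real.exp_le_exp.2 (hK s t hst)

lemma ExpStable.norm_exp_integral_smul_le (hK : ExpStable μ K γ)
    (hμ : ∀ a b, IntervalIntegrable μ volume a b) {g : ℝ → V} {Cg : ℝ} (hg : ∀ s, ‖g s‖ ≤ Cg)
    {s t : ℝ} (hst : s ≤ t) :
    ‖Complex.exp (∫ r in s..t, μ r) • g s‖ ≤ Cg * Real.exp (K - γ * (t - s)) := by
  rw [norm_smul, mul_comm]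
  exact mul_le_mul (hg s) (hK.norm_exp_integral_le hμ hst) (norm_nonneg _)
    ((norm_nonneg _).trans (hg s))

lemma continuous_exp_intervalIntegral_left (hμ : ∀ a b, IntervalIntegrable μ volume a b)
    (t : ℝ) : Continuous fun s => Complex.exp (∫ r in s..t, μ r) := by
  have hc : Continuous fun s => ∫ r in s..t, μ r :=
    (intervalIntegral.continuous_primitive hμ t).neg.congr fun s =>
      (intervalIntegral.integral_symm t s).symm
  exact Complex.continuous_exp.comp hc

lemma ExpStable.integrableOn_exp_integral_smul (hK : ExpStable μ K γ) (hγ : 0 < γ)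
    (hμ : ∀ a b, IntervalIntegrable μ volume a b) {g : ℝ → V} {Cg : ℝ}
    (hgm : AEStronglyMeasurable g) (hg : ∀ s, ‖g s‖ ≤ Cg) (t : ℝ) :
    IntegrableOn (fun s => Complex.exp (∫ r in s..t, μ r) • g s) (Iic t) :=
  Integrable.mono' ((integrableOn_exp_sub_mul_sub_Iic K hγ t).const_mul Cg)
    ((continuous_exp_intervalIntegral_left hμ t).aestronglyMeasurable.smul hgm).restrict
    ((ae_restrict_mem measurableSet_Iic).mono fun _ hs => hK.norm_exp_integral_smul_le hμ hg hs)

lemma ExpStable.norm_variationOfConstants_le (hK : ExpStable μ K γ) (hγ : 0 < γ)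
    (hμ : ∀ a b, IntervalIntegrable μ volume a b) {g : ℝ → V} {Cg : ℝ} (hg : ∀ s, ‖g s‖ ≤ Cg)
    (t : ℝ) : ‖variationOfConstants μ g t‖ ≤ Cg * Real.exp K / γ :=
  calc ‖variationOfConstants μ g t‖ ≤ ∫ s in Iic t, Cg * Real.exp (K - γ * (t - s)) :=
        norm_integral_le_of_norm_le ((integrableOn_exp_sub_mul_sub_Iic K hγ t).const_mul Cg)
          ((ae_restrict_mem measurableSet_Iic).mono fun _ hs =>
            hK.norm_exp_integral_smul_le hμ hg hs)
    _ = Cg * Real.exp K / γ := by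
        rw [integral_const_mul, integral_exp_sub_mul_sub_Iic K hγ, mul_div_assoc]

lemma tendsto_variationOfConstants {ν : ℕ → ℝ → ℂ} {g : ℕ → ℝ → V} {f : ℝ → V} {C Cg : ℝ}
    (hγ : 0 < γ) (hνm : ∀ n, AEStronglyMeasurable (ν n)) (hνb : ∀ n r, ‖ν n r‖ ≤ C)
    (hνK : ∀ n, ExpStable (ν n) K γ) (hgm : ∀ n, AEStronglyMeasurable (g n))
    (hgb : ∀ n s, ‖g n s‖ ≤ Cg) (hν : ∀ r, Tendsto (fun n => ν n r) atTop (𝓝 (μ r)))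
    (hg : ∀ s, Tendsto (fun n => g n s) atTop (𝓝 (f s))) (t : ℝ) :
    Tendsto (fun n => variationOfConstants (ν n) (g n) t) atTop
      (𝓝 (variationOfConstants μ f t)) := by
  have hνi : ∀ n a b, IntervalIntegrable (ν n) volume a b := fun n _ _ =>
    intervalIntegrable_const.mono_fun' (hνm n).restrict (ae_of_all _ (hνb n))
  refine tendsto_integral_of_dominated_convergence (fun s => Cg * Real.exp (K - γ * (t - s)))
    (fun n => ((continuous_exp_intervalIntegral_left (hνi n) t).aestronglyMeasurable.smul
      (hgm n)).restrict)
    ((integrableOn_exp_sub_mul_sub_Iic K hγ t).const_mul Cg)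
    (fun n => (ae_restrict_mem measurableSet_Iic).mono fun _ hs =>
      (hνK n).norm_exp_integral_smul_le (hνi n) (hgb n) hs)
    (ae_of_all _ fun s => ((Complex.continuous_exp.tendsto _).comp
      (tendsto_intervalIntegral_of_norm_le hνm hνb hν s t)).smul (hg s))

end Kernel

section LinearEquation

variable {V : Type*} [NormedAddCommGroup V] [NormedSpace ℂ V] {μ : ℝ → ℂ} {K γ : ℝ}

lemma ExpStable.hasDerivAt_variationOfConstants [CompleteSpace V] (hK : ExpStable μ K γ)
    (hγ : 0 < γ) (hμ : Continuous μ) {f : ℝ → V} (hf : Continuous f) {Cf : ℝ}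
    (hfb : ∀ t, ‖f t‖ ≤ Cf) (t : ℝ) :
    HasDerivAt (variationOfConstants μ f) (μ t • variationOfConstants μ f t + f t) t := by
  have hμi : ∀ a b, IntervalIntegrable μ volume a b := fun a b => hμ.intervalIntegrable a b
  set F : ℝ → ℂ := fun u => ∫ r in (0 : ℝ)..u, μ r
  set h : ℝ → V := fun s => Complex.exp (∫ r in s..0, μ r) • f s
  have hsplit : ∀ s u, ∫ r in s..u, μ r = (∫ r in s..0, μ r) + F u := fun s u =>
    (intervalIntegral.integral_add_adjacent_intervals (hμi s 0) (hμi 0 u)).symm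
  have hy : variationOfConstants μ f = fun u => Complex.exp (F u) • ∫ s in Iic u, h s := by
    funext u
    rw [variationOfConstants, ← integral_smul]
    refine setIntegral_congr_fun measurableSet_Iic fun s _ => ?_
    simp only [h, hsplit s u, Complex.exp_add, smul_smul, mul_comm]
  have hint : ∀ u, IntegrableOn h (Iic u) := fun u => by
    refine IntegrableOn.congr_fun (f := fun s => Complex.exp (-F u) •
      Complex.exp (∫ r in s..u, μ r) • f s) ?_ (fun s _ => ?_) measurableSet_Iic
    · exact (hK.integrableOn_exp_integral_smul hγ hμi hf.aestronglyMeasurable hfb u).smul _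
    simp only [h, hsplit s u, smul_smul, ← Complex.exp_add]
    congr 2
    ring
  have hF : HasDerivAt F (μ t) t := intervalIntegral.integral_hasDerivAt_right (hμi 0 t)
    (hμ.stronglyMeasurableAtFilter _ _) hμ.continuousAt
  have hcancel : Complex.exp (F t) • h t = f t := by
    rw [smul_smul, ← Complex.exp_add, add_comm, ← hsplit, intervalIntegral.integral_same,
      Complex.exp_zero, one_smul]
  rw [hy]
  refine (((Complex.hasDerivAt_exp (F t)).comp t hF).smul (hasDerivAt_setIntegral_Iic
    ((continuous_exp_intervalIntegral_left hμi 0).smul hf) hint t)).congr_deriv ?_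
  change Complex.exp (F t) • h t + (Complex.exp (F t) * μ t) • ∫ s in Iic t, h s =
    μ t • (Complex.exp (F t) • ∫ s in Iic t, h s) + f t
  rw [hcancel, mul_comm, mul_smul, add_comm]

/-- `u ↦ exp (∫_u^t μ) • w u` has derivative zero. -/
lemma eq_exp_integral_smul_of_hasDerivAt (hμ : Continuous μ) {w : ℝ → V}
    (hw : ∀ u, HasDerivAt w (μ u • w u) u) (s t : ℝ) :
    w t = Complex.exp (∫ r in s..t, μ r) • w s := by
  have hderiv : ∀ u, HasDerivAt (fun u => Complex.exp (∫ r in u..t, μ r) • w u) 0 u := fun u => by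
    have hE := (Complex.hasDerivAt_exp _).comp u (intervalIntegral.integral_hasDerivAt_left
      (hμ.intervalIntegrable u t) (hμ.stronglyMeasurableAtFilter _ _) hμ.continuousAt)
    refine (hE.smul (hw u)).congr_deriv ?_
    simp only [Function.comp_apply, smul_smul, ← add_smul, mul_neg, add_neg_cancel, zero_smul]
  have := is_const_of_deriv_eq_zero (fun u => (hderiv u).differentiableAt)
    (fun u => (hderiv u).deriv) t s
  simpa only [intervalIntegral.integral_same, Complex.exp_zero, one_smul] using this

lemma ExpStable.eq_zero_of_hasDerivAt (hK : ExpStable μ K γ) (hγ : 0 < γ) (hμ : Continuous μ)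
    {w : ℝ → V} (hw : ∀ u, HasDerivAt w (μ u • w u) u) {C : ℝ} (hb : ∀ t, ‖w t‖ ≤ C) :
    w = 0 := by
  funext t
  have hle : ∀ s ≤ t, ‖w t‖ ≤ Real.exp (K - γ * (t - s)) * C := fun s hs => by
    rw [eq_exp_integral_smul_of_hasDerivAt hμ hw s t, norm_smul]
    exact mul_le_mul (hK.norm_exp_integral_le (fun a b => hμ.intervalIntegrable a b) hs) (hb s)
      (norm_nonneg _) (Real.exp_pos _).le
  have hlim : Tendsto (fun s => Real.exp (K - γ * (t - s)) * C) atBot (𝓝 0) := by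
    simp_rw [exp_sub_mul_sub_eq]
    simpa using ((Real.tendsto_exp_atBot.comp (tendsto_id.const_mul_atBot hγ)).const_mul
      (Real.exp (K - γ * t))).mul_const C
  exact norm_le_zero_iff.mp (ge_of_tendsto hlim ((eventually_le_atBot t).mono hle))

lemma ExpStable.eq_of_hasDerivAt (hK : ExpStable μ K γ) (hγ : 0 < γ) (hμ : Continuous μ)
    {f z₁ z₂ : ℝ → V} (h₁ : ∀ t, HasDerivAt z₁ (μ t • z₁ t + f t) t)
    (h₂ : ∀ t, HasDerivAt z₂ (μ t • z₂ t + f t) t) {C₁ C₂ : ℝ} (hb₁ : ∀ t, ‖z₁ t‖ ≤ C₁)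
    (hb₂ : ∀ t, ‖z₂ t‖ ≤ C₂) : z₁ = z₂ := by
  have hw : ∀ u, HasDerivAt (z₁ - z₂) (μ u • (z₁ - z₂) u) u := fun u => by
    simpa only [Pi.sub_apply, smul_sub, add_sub_add_right_eq_sub] using (h₁ u).sub (h₂ u)
  exact sub_eq_zero.mp (hK.eq_zero_of_hasDerivAt hγ hμ hw fun t =>
    (norm_sub_le _ _).trans (add_le_add (hb₁ t) (hb₂ t)))

end LinearEquation

section AlmostAutomorphy

variable {E : Type*} [NormedAddCommGroup E] {ψ : ℝ → E}

lemma AlmostAutomorphic.neg (h : AlmostAutomorphic ψ) : AlmostAutomorphic fun t => -ψ t := by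
  refine ⟨h.1.neg, fun σ => ?_⟩
  obtain ⟨k, hk, ψ', h₁, h₂⟩ := h.2 σ
  exact ⟨k, hk, fun t => -ψ' t, fun t => (h₁ t).neg, fun t => (h₂ t).neg⟩

lemma AlmostAutomorphic.comp_neg (h : AlmostAutomorphic ψ) :
    AlmostAutomorphic fun t => ψ (-t) := by
  refine ⟨h.1.comp continuous_neg, fun σ => ?_⟩
  obtain ⟨k, hk, ψ', h₁, h₂⟩ := h.2 fun n => -σ n
  refine ⟨k, hk, fun t => ψ' (-t), fun t => ?_, fun t => ?_⟩
  · simpa only [neg_add] using h₁ (-t)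
  · simpa only [neg_sub, sub_neg_eq_add, neg_add_eq_sub] using h₂ (-t)

end AlmostAutomorphy

section Shifts

variable {V : Type*} [NormedAddCommGroup V] [NormedSpace ℂ V] {μ : ℝ → ℂ} {K γ : ℝ}

lemma ExpStable.comp_add_right (hK : ExpStable μ K γ) (c : ℝ) :
    ExpStable (fun r => μ (r + c)) K γ := fun s t hst => by
  simpa only [intervalIntegral.integral_comp_add_right (fun r => (μ r).re),
    add_sub_add_right_eq_sub] using hK (s + c) (t + c) (by linarith)

lemma ExpStable.of_tendsto {ν : ℕ → ℝ → ℂ} {C : ℝ} (hK : ∀ n, ExpStable (ν n) K γ)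
    (hm : ∀ n, AEStronglyMeasurable (ν n)) (hb : ∀ n r, ‖ν n r‖ ≤ C)
    (hlim : ∀ r, Tendsto (fun n => ν n r) atTop (𝓝 (μ r))) : ExpStable μ K γ := fun s t hst =>
  le_of_tendsto (tendsto_intervalIntegral_of_norm_le (fun n => (hm n).re)
      (fun n r => (Complex.abs_re_le_norm _).trans (hb n r))
      (fun r => (Complex.continuous_re.tendsto _).comp (hlim r)) s t)
    (Eventually.of_forall fun n => hK n s t hst)

lemma variationOfConstants_add (μ : ℝ → ℂ) (f : ℝ → V) (t c : ℝ) :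
    variationOfConstants μ f (t + c) =
      variationOfConstants (fun r => μ (r + c)) (fun s => f (s + c)) t := by
  simp only [variationOfConstants, intervalIntegral.integral_comp_add_right (fun r => μ r)]
  exact (setIntegral_Iic_comp_add_right (fun s => Complex.exp (∫ r in s..t + c, μ r) • f s)
    t c).symm

lemma ExpStable.tendsto_variationOfConstants_add {μ' : ℝ → ℂ} {f f' : ℝ → V} {τ : ℕ → ℝ}
    {C Cf : ℝ} (hK : ExpStable μ K γ) (hγ : 0 < γ) (hμm : AEStronglyMeasurable μ)
    (hμb : ∀ r, ‖μ r‖ ≤ C) (hfm : AEStronglyMeasurable f) (hfb : ∀ s, ‖f s‖ ≤ Cf)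
    (hμ : ∀ r, Tendsto (fun n => μ (r + τ n)) atTop (𝓝 (μ' r)))
    (hf : ∀ s, Tendsto (fun n => f (s + τ n)) atTop (𝓝 (f' s))) (t : ℝ) :
    Tendsto (fun n => variationOfConstants μ f (t + τ n)) atTop
      (𝓝 (variationOfConstants μ' f' t)) := by
  simp only [variationOfConstants_add]
  exact tendsto_variationOfConstants hγ (fun n => hμm.comp_add_right (τ n)) (fun n r => hμb _)
    (fun n => hK.comp_add_right (τ n)) (fun n => hfm.comp_add_right (τ n)) (fun n s => hfb _)
    hμ hf t

end Shifts

section Solution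

variable {V : Type*} [NormedAddCommGroup V] [NormedSpace ℂ V] [CompleteSpace V] {μ : ℝ → ℂ}
  {f : ℝ → V} {K γ C Cf : ℝ}

lemma ExpStable.almostAutomorphic_variationOfConstants (hK : ExpStable μ K γ) (hγ : 0 < γ)
    (hμb : ∀ t, ‖μ t‖ ≤ C) (hμ : AlmostAutomorphic μ) (hfb : ∀ t, ‖f t‖ ≤ Cf)
    (hf : AlmostAutomorphic f) : AlmostAutomorphic (variationOfConstants μ f) := by
  refine ⟨continuous_iff_continuousAt.2 fun t =>
    (hK.hasDerivAt_variationOfConstants hγ hμ.1 hf.1 hfb t).continuousAt, fun σ => ?_⟩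
  obtain ⟨k₁, hk₁, μ', hμ₁, hμ₂⟩ := hμ.2 σ
  obtain ⟨k₂, hk₂, f', hf₁, hf₂⟩ := hf.2 (σ ∘ k₁)
  have hμm : AEStronglyMeasurable μ := hμ.1.aestronglyMeasurable
  have hfm : AEStronglyMeasurable f := hf.1.aestronglyMeasurable
  have hμ'K : ExpStable μ' K γ := ExpStable.of_tendsto (fun n => hK.comp_add_right _)
    (fun n => hμm.comp_add_right _) (fun n r => hμb _) hμ₁
  have hμ'b : ∀ r, ‖μ' r‖ ≤ C := fun r =>
    le_of_tendsto (hμ₁ r).norm (Eventually.of_forall fun n => hμb _)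
  have hf'b : ∀ s, ‖f' s‖ ≤ Cf := fun s =>
    le_of_tendsto (hf₁ s).norm (Eventually.of_forall fun n => hfb _)
  refine ⟨k₁ ∘ k₂, hk₁.comp hk₂, variationOfConstants μ' f', fun t => ?_, fun t => ?_⟩
  · exact hK.tendsto_variationOfConstants_add hγ hμm hμb hfm hfb
      (fun r => (hμ₁ r).comp hk₂.tendsto_atTop) hf₁ t
  · simpa only [sub_eq_add_neg] using hμ'K.tendsto_variationOfConstants_add hγ
      (aestronglyMeasurable_of_tendsto_comp_add hμm hμ₁) hμ'b
      (aestronglyMeasurable_of_tendsto_comp_add hfm hf₁) hf'b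
      (fun r => by simpa only [sub_eq_add_neg, Function.comp_def] using
        (hμ₂ r).comp hk₂.tendsto_atTop)
      (fun s => by simpa only [sub_eq_add_neg, Function.comp_apply] using hf₂ s) t

theorem ExpStable.isUniqueBoundedAlmostAutomorphicSolution (hK : ExpStable μ K γ) (hγ : 0 < γ)
    (hμb : ∀ t, ‖μ t‖ ≤ C) (hμ : AlmostAutomorphic μ) (hfb : ∀ t, ‖f t‖ ≤ Cf)
    (hf : AlmostAutomorphic f) :
    IsUniqueBoundedAlmostAutomorphicSolution μ f (variationOfConstants μ f) := by
  have hy := hK.hasDerivAt_variationOfConstants hγ hμ.1 hf.1 hfb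
  have hyb := hK.norm_variationOfConstants_le hγ (fun a b => hμ.1.intervalIntegrable a b) hfb
  refine ⟨hy, ⟨_, hyb⟩, hK.almostAutomorphic_variationOfConstants hγ hμb hμ hfb hf, ?_⟩
  rintro z hz ⟨Cz, hCz⟩
  exact hK.eq_of_hasDerivAt hγ hμ.1 hz hy hCz hyb

end Solution

section TimeReversal

variable {V : Type*} [NormedAddCommGroup V] [NormedSpace ℂ V] {μ : ℝ → ℂ} {f : ℝ → V}

lemma hasDerivAt_comp_neg_of_forall {z : ℝ → V} (hz : ∀ t, HasDerivAt z (μ t • z t + f t) t)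
    (u : ℝ) : HasDerivAt (fun u => z (-u)) ((-μ (-u)) • z (-u) + -f (-u)) u := by
  refine ((hz (-u)).scomp u (hasDerivAt_neg u)).congr_deriv ?_
  rw [neg_one_smul, neg_add, neg_smul]

lemma variationOfConstants_neg_comp_neg (μ : ℝ → ℂ) (f : ℝ → V) (t : ℝ) :
    variationOfConstants (fun r => -μ (-r)) (fun s => -f (-s)) (-t) =
      -∫ s in Ici t, Complex.exp (∫ r in s..t, μ r) • f s := by
  have hker : ∀ s, ∫ r in s..-t, -μ (-r) = ∫ r in -s..t, μ r := fun s => by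
    rw [intervalIntegral.integral_neg, intervalIntegral.integral_comp_neg (fun r => μ r), neg_neg,
      intervalIntegral.integral_symm, neg_neg]
  simp only [variationOfConstants, hker, smul_neg, integral_neg]
  rw [integral_comp_neg_Iic (-t) (fun u => Complex.exp (∫ r in u..t, μ r) • f u), neg_neg,
    integral_Ici_eq_integral_Ioi]

lemma IsUniqueBoundedAlmostAutomorphicSolution.comp_neg {y : ℝ → V}
    (h : IsUniqueBoundedAlmostAutomorphicSolution (fun r => -μ (-r)) (fun s => -f (-s)) y) :
    IsUniqueBoundedAlmostAutomorphicSolution μ f fun t => y (-t) := by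
  obtain ⟨hy, ⟨C, hC⟩, haa, huniq⟩ := h
  refine ⟨fun t => ?_, ⟨C, fun t => hC (-t)⟩, haa.comp_neg, fun z hz ⟨Cz, hCz⟩ => ?_⟩
  · simpa only [neg_neg] using hasDerivAt_comp_neg_of_forall hy t
  · funext t
    simpa only [neg_neg] using
      congrFun (huniq _ (hasDerivAt_comp_neg_of_forall hz) ⟨Cz, fun u => hCz (-u)⟩) (-t)

end TimeReversal

theorem massera_scalar_almost_automorphic_general
    {V : Type*} [NormedAddCommGroup V] [NormedSpace ℂ V] [CompleteSpace V]
    (μ : ℝ → ℂ) (hμb : ∃ C, ∀ t, ‖μ t‖ ≤ C)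
    (hμaa : AlmostAutomorphic μ)
    (m : ℝ) (hm : ErgodicMeanR (fun t => (μ t).re) m)
    (f : ℝ → V) (hfb : ∃ C, ∀ t, ‖f t‖ ≤ C)
    (hfaa : AlmostAutomorphic f) :
    (m < 0 →
      (∀ t : ℝ, HasDerivAt (fun t => ∫ s in Set.Iic t, Complex.exp (∫ r in s..t, μ r) • f s)
        (μ t • (∫ s in Set.Iic t, Complex.exp (∫ r in s..t, μ r) • f s) + f t) t) ∧
      (∃ C, ∀ t : ℝ, ‖∫ s in Set.Iic t, Complex.exp (∫ r in s..t, μ r) • f s‖ ≤ C) ∧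
      AlmostAutomorphic (fun t => ∫ s in Set.Iic t, Complex.exp (∫ r in s..t, μ r) • f s) ∧
      (∀ z : ℝ → V, (∀ t : ℝ, HasDerivAt z (μ t • z t + f t) t) →
        (∃ C, ∀ t : ℝ, ‖z t‖ ≤ C) →
        z = fun t => ∫ s in Set.Iic t, Complex.exp (∫ r in s..t, μ r) • f s)) ∧
    (0 < m →
      (∀ t : ℝ, HasDerivAt (fun t => -∫ s in Set.Ici t, Complex.exp (∫ r in s..t, μ r) • f s)
        (μ t • (-∫ s in Set.Ici t, Complex.exp (∫ r in s..t, μ r) • f s) + f t) t) ∧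
      (∃ C, ∀ t : ℝ, ‖-∫ s in Set.Ici t, Complex.exp (∫ r in s..t, μ r) • f s‖ ≤ C) ∧
      AlmostAutomorphic (fun t => -∫ s in Set.Ici t, Complex.exp (∫ r in s..t, μ r) • f s) ∧
      (∀ z : ℝ → V, (∀ t : ℝ, HasDerivAt z (μ t • z t + f t) t) →
        (∃ C, ∀ t : ℝ, ‖z t‖ ≤ C) →
        z = fun t => -∫ s in Set.Ici t, Complex.exp (∫ r in s..t, μ r) • f s)) := by
  obtain ⟨C, hC⟩ := hμb
  obtain ⟨Cf, hCf⟩ := hfb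
  refine ⟨fun hneg => ?_, fun hpos => ?_⟩
  · obtain ⟨K, hK⟩ := hm.expStable hC hneg
    exact hK.isUniqueBoundedAlmostAutomorphicSolution (by linarith) hC hμaa hCf hfaa
  · have hm' : ErgodicMeanR (fun t => (-μ (-t)).re) (-m) := hm.comp_neg
    have hC' : ∀ t, ‖-μ (-t)‖ ≤ C := fun t => (norm_neg _).trans_le (hC (-t))
    obtain ⟨K, hK⟩ := hm'.expStable hC' (by linarith)
    have h := (hK.isUniqueBoundedAlmostAutomorphicSolution (by linarith) hC' hμaa.comp_neg.neg
      (fun t => (norm_neg _).trans_le (hCf (-t))) hfaa.comp_neg.neg).comp_neg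
    rwa [funext (variationOfConstants_neg_comp_neg μ f)] at h

theorem massera_scalar_almost_automorphic
    {V : Type*} [NormedAddCommGroup V] [NormedSpace ℂ V] [CompleteSpace V]
    (μ : ℝ → ℂ) (hμc : Continuous μ) (hμb : ∃ C, ∀ t, ‖μ t‖ ≤ C)
    (hμaa : AlmostAutomorphic μ)
    (m : ℝ) (hm : ErgodicMeanR (fun t => (μ t).re) m) (hm0 : m ≠ 0)
    (f : ℝ → V) (hfc : Continuous f) (hfb : ∃ C, ∀ t, ‖f t‖ ≤ C)
    (hfaa : AlmostAutomorphic f) :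
    (m < 0 →
      (∀ t : ℝ, HasDerivAt (fun t => ∫ s in Set.Iic t, Complex.exp (∫ r in s..t, μ r) • f s)
        (μ t • (∫ s in Set.Iic t, Complex.exp (∫ r in s..t, μ r) • f s) + f t) t) ∧
      (∃ C, ∀ t : ℝ, ‖∫ s in Set.Iic t, Complex.exp (∫ r in s..t, μ r) • f s‖ ≤ C) ∧
      AlmostAutomorphic (fun t => ∫ s in Set.Iic t, Complex.exp (∫ r in s..t, μ r) • f s) ∧
      (∀ z : ℝ → V, (∀ t : ℝ, HasDerivAt z (μ t • z t + f t) t) →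
        (∃ C, ∀ t : ℝ, ‖z t‖ ≤ C) →
        z = fun t => ∫ s in Set.Iic t, Complex.exp (∫ r in s..t, μ r) • f s)) ∧
    (0 < m →
      (∀ t : ℝ, HasDerivAt (fun t => -∫ s in Set.Ici t, Complex.exp (∫ r in s..t, μ r) • f s)
        (μ t • (-∫ s in Set.Ici t, Complex.exp (∫ r in s..t, μ r) • f s) + f t) t) ∧
      (∃ C, ∀ t : ℝ, ‖-∫ s in Set.Ici t, Complex.exp (∫ r in s..t, μ r) • f s‖ ≤ C) ∧
      AlmostAutomorphic (fun t => -∫ s in Set.Ici t, Complex.exp (∫ r in s..t, μ r) • f s) ∧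
      (∀ z : ℝ → V, (∀ t : ℝ, HasDerivAt z (μ t • z t + f t) t) →
        (∃ C, ∀ t : ℝ, ‖z t‖ ≤ C) →
        z = fun t => -∫ s in Set.Ici t, Complex.exp (∫ r in s..t, μ r) • f s)) :=
  massera_scalar_almost_automorphic_general μ hμb hμaa m hm f hfb hfaa
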